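/- For every ε ∈ (0, π), ω > 0 and integer k ≥ 0 there exist constants c_k, δ > 0, depending only on ε, ω and k, such that for all λ ∈ Σ_ε with |λ| ≥ ω, all s > 0 and all y ≥ 0, (1 + y) s^k |(d/ds)^k exp(−y √(λ + s²))| ≤ c_k e^{−δ s y}. (The k-th derivative in s is well defined, since for such λ one has λ + s² ∉ (−∞, 0] and the principal square root is smooth there.) -/

import Mathlib

open MeasureTheory Real

/-- Principal complex square root `√z = z^(1/2)` (principal branch of `cpow`). -/
noncomputable def csqrt (z : ℂ) : ℂ := z ^ (1/2 : ℂ)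

/-- The sector `Σ_ε = {λ ∈ ℂ : λ ≠ 0, |Arg λ| < π − ε}`. -/
def SigmaSector (ε : ℝ) : Set ℂ := {l : ℂ | l ≠ 0 ∧ |l.arg| < Real.pi - ε}

/-- Mikhlin condition (M) with constant `cbar`, with `K = ⌊(d+1)/2⌋`. -/
def CondM (d : ℕ) (m : EuclideanSpace ℝ (Fin (d-1)) → ℂ) (cbar : ℝ) : Prop :=
  ContDiffOn ℝ ((d+1)/2 : ℕ) m {ξ : EuclideanSpace ℝ (Fin (d-1)) | ξ ≠ 0} ∧
  ∀ k : ℕ, k ≤ (d+1)/2 → ∀ ξ : EuclideanSpace ℝ (Fin (d-1)), ξ ≠ 0 →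
    ‖ξ‖ ^ k * ‖iteratedFDerivWithin ℝ k m
        {ξ : EuclideanSpace ℝ (Fin (d-1)) | ξ ≠ 0} ξ‖ ≤ cbar

/-- Parameterized Mikhlin condition (M*) with constants `(cbar, δ)`, `K = ⌊(d+1)/2⌋`. -/
def CondMStar (d : ℕ) (m : EuclideanSpace ℝ (Fin (d-1)) → ℝ → ℂ) (cbar δ : ℝ) : Prop :=
  (∀ y : ℝ, 0 ≤ y →
    ContDiffOn ℝ ((d+1)/2 : ℕ) (fun ξ => m ξ y)
      {ξ : EuclideanSpace ℝ (Fin (d-1)) | ξ ≠ 0}) ∧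
  ∀ k : ℕ, k ≤ (d+1)/2 →
    ∀ ξ : EuclideanSpace ℝ (Fin (d-1)), ξ ≠ 0 → ∀ y : ℝ, 0 ≤ y →
      ‖ξ‖ ^ k * ‖iteratedFDerivWithin ℝ k (fun ξ => m ξ y)
          {ξ : EuclideanSpace ℝ (Fin (d-1)) | ξ ≠ 0} ξ‖ ≤
        cbar * Real.exp (-δ * ‖ξ‖ * y) / (1 + y)

/-- The fundamental multiplier `m₀(s, y)`. -/
noncomputable def m0 (l : ℂ) (α : ℝ) (s y : ℝ) : ℂ :=
  ((csqrt (l + (s:ℂ)^2) + s) / ((α:ℂ) + l + csqrt (l + (s:ℂ)^2) + s)) *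
    ((Complex.exp (-(y:ℂ) * csqrt (l + (s:ℂ)^2)) - Complex.exp (-(y:ℂ) * s)) / l)

/-- `E(s, y) = e^{-ys} - e^{-y√(λ+s²)}`. -/
noncomputable def Efun (l : ℂ) (s y : ℝ) : ℂ :=
  Complex.exp (-(y:ℂ) * s) - Complex.exp (-(y:ℂ) * csqrt (l + (s:ℂ)^2))

/-!
For fixed `λ` and `y` the function `t ↦ exp (-y √(λ + t²))` is holomorphic on the disc of radius
`θ s` about `s`, and there `Re √(λ + t²) ≥ δ (√ω + s)` uniformly in `λ ∈ Σ_ε` with `|λ| ≥ ω`.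
Cauchy's estimate on this disc gives
`|∂ₛᵏ exp (-y √(λ + s²))| ≤ k! (θ s)⁻ᵏ exp (-δ √ω y) exp (-δ s y)`, and `exp (-δ √ω y)` absorbs
the factor `1 + y`.

The lower bound on `Re √` comes from `2 (Re √z)² = |z| + Re z`. This quantity is `2`-Lipschitz in
`z`, which handles `t² ≈ s²`; on the ray `λ + [0, ∞)` it is at least `sin² ε (|λ| + r) / 18`
because `Re λ ≥ -cos ε |λ|`; and its positivity keeps `λ + t²` in the slit plane.
-/

open Metric Topology

lemma csqrt_re (z : ℂ) : (csqrt z).re = √((‖z‖ + z.re) / 2) := by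
  rw [csqrt, one_div]
  exact Complex.cpow_inv_two_re z

lemma mul_add_le_re_csqrt {c ω s : ℝ} (hω : 0 ≤ ω) {z : ℂ}
    (h : c ^ 2 * (ω + s ^ 2) ≤ ‖z‖ + z.re) : c / 2 * (√ω + s) ≤ (csqrt z).re := by
  rw [csqrt_re]
  apply Real.le_sqrt_of_sq_le
  have hsq : (√ω + s) ^ 2 ≤ 2 * (ω + s ^ 2) := by
    nlinarith [Real.sq_sqrt hω, sq_nonneg (√ω - s)]
  nlinarith [mul_le_mul_of_nonneg_left hsq (sq_nonneg c)]

lemma mem_slitPlane_of_norm_add_re_pos {z : ℂ} (h : 0 < ‖z‖ + z.re) : z ∈ Complex.slitPlane := by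
  rw [Complex.mem_slitPlane_iff]
  by_contra! hz
  have hnorm : ‖z‖ = |z.re| := by
    rw [← Complex.re_add_im z, hz.2, Complex.ofReal_zero, zero_mul, add_zero, Complex.norm_real,
      Real.norm_eq_abs, Complex.ofReal_re]
  rw [hnorm, abs_of_nonpos hz.1] at h
  linarith

lemma norm_add_re_sub_le (z w : ℂ) : ‖w‖ + w.re - 2 * ‖z - w‖ ≤ ‖z‖ + z.re := by
  have h₁ : ‖w‖ - ‖z‖ ≤ ‖z - w‖ := by rw [norm_sub_rev]; exact norm_sub_norm_le w z
  have h₂ : w.re - z.re ≤ ‖z - w‖ := by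
    rw [norm_sub_rev, ← Complex.sub_re]; exact Complex.re_le_norm _
  linarith

lemma neg_cos_mul_norm_le_re {ε : ℝ} (hε : 0 ≤ ε) {l : ℂ} (harg : |l.arg| ≤ π - ε) :
    -Real.cos ε * ‖l‖ ≤ l.re := by
  have hcos : Real.cos (π - ε) ≤ Real.cos |l.arg| :=
    Real.cos_le_cos_of_nonneg_of_le_pi (abs_nonneg _) (by linarith) harg
  rw [Real.cos_pi_sub, Real.cos_abs] at hcos
  rw [← Complex.norm_mul_cos_arg l]
  nlinarith [norm_nonneg l]

lemma one_sub_sq_div_mul_le_norm_add_re {κ r : ℝ} {l : ℂ} (hl : -κ * ‖l‖ ≤ l.re) (hr : 0 ≤ r) :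
    (1 - κ ^ 2) / 18 * (‖l‖ + r) ≤ ‖l + r‖ + (l + r).re := by
  set z := l + r
  have hzre : z.re = l.re + r := by simp [z]
  have hzim : z.im = l.im := by simp [z]
  have hz : ‖z‖ ^ 2 = z.re ^ 2 + z.im ^ 2 := by rw [Complex.sq_norm, Complex.normSq_apply]; ring
  have hl2 : ‖l‖ ^ 2 = l.re ^ 2 + l.im ^ 2 := by rw [Complex.sq_norm, Complex.normSq_apply]; ring
  have hzn : ‖z‖ ≤ ‖l‖ + r := by
    simpa [z, abs_of_nonneg hr] using norm_add_le l (r : ℂ)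
  have hzre_le : z.re ≤ ‖z‖ := Complex.re_le_norm z
  have hN : 0 ≤ ‖z‖ + z.re := by linarith [Complex.abs_re_le_norm z, neg_abs_le z.re]
  have hlre : -‖l‖ ≤ l.re := by linarith [Complex.abs_re_le_norm l, neg_abs_le l.re]
  have hκ : (1 - κ ^ 2) / 18 * (‖l‖ + r) ≤ (‖l‖ + r) / 18 := by
    nlinarith [mul_nonneg (sq_nonneg κ) (add_nonneg (norm_nonneg l) hr)]
  rcases le_or_gt 0 l.re with hre | hre
  · have : ‖l‖ ≤ ‖z‖ := by
      refine (pow_le_pow_iff_left₀ (norm_nonneg _) (norm_nonneg _) two_ne_zero).mp ?_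
      rw [hl2, hz, hzre, hzim]
      nlinarith
    linarith
  rcases le_or_gt (2 * ‖l‖) r with hrl | hrl
  · linarith
  rcases le_or_gt (1 - κ ^ 2) 0 with hκ1 | hκ1
  · nlinarith [mul_nonpos_of_nonpos_of_nonneg hκ1 (add_nonneg (norm_nonneg l) hr)]
  -- `(|z| + Re z) (|z| - Re z) = (Im λ)²`, and `Im λ` is large when `Re λ < 0`
  have hprod : (‖z‖ + z.re) * (‖z‖ - z.re) = l.im ^ 2 := by rw [← hzim]; linear_combination hz
  have him : (1 - κ ^ 2) * ‖l‖ ^ 2 ≤ l.im ^ 2 := by nlinarith [norm_nonneg l]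
  have hdiff : ‖z‖ - z.re ≤ 6 * ‖l‖ := by linarith [Complex.abs_re_le_norm z, neg_abs_le z.re]
  have hl0 : 0 < ‖l‖ := by linarith
  have : (1 - κ ^ 2) * ‖l‖ ≤ 6 * (‖z‖ + z.re) := by
    refine le_of_mul_le_mul_right ?_ hl0
    nlinarith [mul_le_mul_of_nonneg_left hdiff hN]
  nlinarith

lemma norm_sq_sub_sq_le {s θ : ℝ} (hs : 0 ≤ s) (hθ : θ ≤ 1) {t : ℂ} (ht : ‖t - s‖ ≤ θ * s) :
    ‖t ^ 2 - (s : ℂ) ^ 2‖ ≤ 3 * θ * s ^ 2 := by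
  have hsum : ‖t - s + 2 * s‖ ≤ θ * s + 2 * s := by
    refine (norm_add_le _ _).trans (add_le_add ht (le_of_eq ?_))
    rw [norm_mul, Complex.norm_two, Complex.norm_real, Real.norm_of_nonneg hs]
  calc ‖t ^ 2 - (s : ℂ) ^ 2‖ = ‖t - s‖ * ‖t - s + 2 * s‖ := by rw [← norm_mul]; ring_nf
    _ ≤ θ * s * (θ * s + 2 * s) := by gcongr; exact (norm_nonneg _).trans ht
    _ ≤ 3 * θ * s ^ 2 := by
      have hθs : 0 ≤ θ * s := (norm_nonneg _).trans ht
      nlinarith [mul_le_mul_of_nonneg_left (mul_le_of_le_one_left hs hθ) hθs]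

lemma sin_div_six_sq_mul_le_norm_add_re {ε : ℝ} (hε : 0 ≤ ε) {l : ℂ} (harg : |l.arg| ≤ π - ε)
    {s : ℝ} (hs : 0 ≤ s) {t : ℂ} (ht : ‖t - s‖ ≤ Real.sin ε ^ 2 / 216 * s) :
    (Real.sin ε / 6) ^ 2 * (‖l‖ + s ^ 2) ≤ ‖l + t ^ 2‖ + (l + t ^ 2).re := by
  have hreal := one_sub_sq_div_mul_le_norm_add_re (neg_cos_mul_norm_le_re hε harg) (sq_nonneg s)
  rw [← Real.sin_sq, Complex.ofReal_pow] at hreal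
  have hsq := norm_sq_sub_sq_le hs (by nlinarith [Real.sin_sq_le_one ε]) ht
  have hpert := norm_add_re_sub_le (l + t ^ 2) (l + (s : ℂ) ^ 2)
  rw [add_sub_add_left_eq_sub] at hpert
  nlinarith [sq_nonneg (Real.sin ε), norm_nonneg l]

lemma differentiableAt_cexp_mul_csqrt (c l : ℂ) {t : ℂ} (ht : l + t ^ 2 ∈ Complex.slitPlane) :
    DifferentiableAt ℂ (fun t => Complex.exp (c * csqrt (l + t ^ 2))) t := by
  have hsqrt : DifferentiableAt ℂ (fun t => csqrt (l + t ^ 2)) t :=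
    ((differentiableAt_const l).add (differentiableAt_pow 2)).cpow (differentiableAt_const _) ht
  exact (hsqrt.const_mul c).cexp

lemma iteratedDeriv_comp_ofReal {f : ℂ → ℂ} {U : Set ℂ} (hU : IsOpen U)
    (hf : DifferentiableOn ℂ f U) (k : ℕ) {s : ℝ} (hs : (s : ℂ) ∈ U) :
    iteratedDeriv k (fun t : ℝ => f t) s = iteratedDeriv k f s := by
  induction k generalizing s with
  | zero => simp
  | succ k ih =>
    have hfk : DifferentiableOn ℂ (iteratedDeriv k f) U := by
      rw [iteratedDeriv_eq_iterate]
      exact ((hf.analyticOnNhd hU).iterated_deriv k).differentiableOn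
    have heq : (fun x : ℝ => iteratedDeriv k (fun t : ℝ => f t) x) =ᶠ[𝓝 s]
        fun x : ℝ => iteratedDeriv k f x := by
      filter_upwards [(hU.preimage Complex.continuous_ofReal).mem_nhds hs] with x hx using ih hx
    rw [iteratedDeriv_succ, iteratedDeriv_succ, heq.deriv_eq]
    exact ((hfk.differentiableAt (hU.mem_nhds hs)).hasDerivAt.comp_ofReal).deriv

lemma norm_iteratedDeriv_cexp_neg_mul_csqrt_le {ε ω : ℝ} (hε : ε ∈ Set.Ioo 0 π) (hω : 0 ≤ ω)
    {l : ℂ} (harg : |l.arg| ≤ π - ε) (hωl : ω ≤ ‖l‖) {s y : ℝ} (hs : 0 < s) (hy : 0 ≤ y) (k : ℕ) :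
    ‖iteratedDeriv k (fun t : ℝ => Complex.exp (-(y:ℂ) * csqrt (l + (t:ℂ)^2))) s‖ ≤
      k.factorial * Real.exp (-(Real.sin ε / 12 * (√ω + s) * y)) /
        (Real.sin ε ^ 2 / 216 * s) ^ k := by
  have hsin := Real.sin_pos_of_pos_of_lt_pi hε.1 hε.2
  set F : ℂ → ℂ := fun t => Complex.exp (-(y:ℂ) * csqrt (l + t ^ 2))
  set r := Real.sin ε ^ 2 / 216 * s
  have hN : ∀ t ∈ closedBall (s : ℂ) r,
      (Real.sin ε / 6) ^ 2 * (ω + s ^ 2) ≤ ‖l + t ^ 2‖ + (l + t ^ 2).re := fun t ht =>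
    le_trans (by gcongr)
      (sin_div_six_sq_mul_le_norm_add_re hε.1.le harg hs.le (mem_closedBall_iff_norm.mp ht))
  have hF : DifferentiableOn ℂ F (closedBall (s : ℂ) r) := fun t ht =>
    have hpos : 0 < (Real.sin ε / 6) ^ 2 * (ω + s ^ 2) := by positivity
    (differentiableAt_cexp_mul_csqrt _ _
      (mem_slitPlane_of_norm_add_re_pos (hpos.trans_le (hN t ht)))).differentiableWithinAt
  have hFbound : ∀ t ∈ sphere (s : ℂ) r,
      ‖F t‖ ≤ Real.exp (-(Real.sin ε / 12 * (√ω + s) * y)) := by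
    intro t ht
    have hre := mul_add_le_re_csqrt hω (hN t (sphere_subset_closedBall ht))
    rw [Complex.norm_exp]
    gcongr
    simp only [neg_mul, Complex.neg_re, Complex.re_ofReal_mul]
    nlinarith
  rw [iteratedDeriv_comp_ofReal isOpen_ball (hF.mono ball_subset_closedBall) k
    (mem_ball_self (by positivity))]
  exact Complex.norm_iteratedDeriv_le_of_forall_mem_sphere_norm_le k (by positivity)
    (hF.diffContOnCl_ball le_rfl) hFbound

lemma one_add_mul_exp_neg_le {β y : ℝ} (hβ : 0 < β) (hy : 0 ≤ y) :
    (1 + y) * Real.exp (-(β * y)) ≤ 1 + 1 / β := by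
  rw [Real.exp_neg, ← div_eq_mul_inv, div_le_iff₀ (Real.exp_pos _)]
  calc 1 + y ≤ (1 + 1 / β) * (β * y + 1) := by
        field_simp
        nlinarith [mul_nonneg hβ.le hy]
    _ ≤ (1 + 1 / β) * Real.exp (β * y) := by gcongr; exact Real.add_one_le_exp _

/-- derivatives in `s` of `e^{-y√(λ+s²)}` satisfy the (M*)-type bounds. -/
theorem stmt_11 (ε ω : ℝ) (hε : ε ∈ Set.Ioo 0 Real.pi) (hω : 0 < ω) (k : ℕ) :
    ∃ cₖ δ : ℝ, 0 < cₖ ∧ 0 < δ ∧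
      ∀ l ∈ SigmaSector ε, ω ≤ ‖l‖ → ∀ s y : ℝ, 0 < s → 0 ≤ y →
        (1 + y) * s ^ k *
            ‖iteratedDeriv k
              (fun t : ℝ => Complex.exp (-(y:ℂ) * csqrt (l + (t:ℂ)^2))) s‖ ≤
          cₖ * Real.exp (-δ * s * y) := by
  have hsin := Real.sin_pos_of_pos_of_lt_pi hε.1 hε.2
  set δ := Real.sin ε / 12
  set θ := Real.sin ε ^ 2 / 216
  set β := δ * √ω
  have hβ : 0 < β := by positivity
  refine ⟨(1 + 1 / β) * k.factorial / θ ^ k, δ, by positivity, by positivity, ?_⟩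
  rintro l ⟨-, harg⟩ hωl s y hs hy
  calc _ ≤ (1 + y) * s ^ k * (k.factorial * Real.exp (-(δ * (√ω + s) * y)) / (θ * s) ^ k) := by
        gcongr
        exact norm_iteratedDeriv_cexp_neg_mul_csqrt_le hε hω.le harg.le hωl hs hy k
    _ = (1 + y) * Real.exp (-(β * y)) * (k.factorial / θ ^ k) * Real.exp (-δ * s * y) := by
      have hexp :
          Real.exp (-(δ * (√ω + s) * y)) = Real.exp (-(β * y)) * Real.exp (-δ * s * y) := by
        rw [← Real.exp_add]; congr 1; simp only [β]; ring
      rw [hexp, mul_pow]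
      field_simp
    _ ≤ (1 + 1 / β) * (k.factorial / θ ^ k) * Real.exp (-δ * s * y) := by
      gcongr
      exact one_add_mul_exp_neg_le hβ hy
    _ = (1 + 1 / β) * k.factorial / θ ^ k * Real.exp (-δ * s * y) := by ring
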